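/- arXiv:1912.00136 — 8 statements merged into one kernel-verified Lean document; each statement's English description precedes it below -/
import Mathlib

section
/- In the ring R, for all natural numbers m, n, l, the element u_ξ^m · u_{ξ^p}^n · u_{ξ^q}^l has infinite additive order; in particular it is nonzero. (This realizes the case |⋆| = 0 of Theorem 3.8, where the cohomology group is the infinite cyclic group generated by the unique monomial u_ξ^m u_{ξ^p}^n u_{ξ^q}^l.) -/
open MvPolynomial

/-- Variables: `X 0 = a_ξ`, `X 1 = a_{ξ^p}`, `X 2 = a_{ξ^q}`,
`X 3 = u_ξ`, `X 4 = u_{ξ^p}`, `X 5 = u_{ξ^q}`. -/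
noncomputable def relIdeal (p q : ℕ) : Ideal (MvPolynomial (Fin 6) ℤ) :=
  Ideal.span
    { C ((p : ℤ) * q) * X 0,
      C (q : ℤ) * X 1,
      C (p : ℤ) * X 2,
      X 3 * X 1 - C (p : ℤ) * (X 4 * X 0),
      X 3 * X 2 - C (q : ℤ) * (X 5 * X 0) }

/-- The ring `R` of the paper: positive-degree part of `H^⋆_{C_{pq}}(S^0; ℤ)`. -/
abbrev RR (p q : ℕ) : Type := MvPolynomial (Fin 6) ℤ ⧸ relIdeal p q

/-- The quotient map. -/
noncomputable def mk (p q : ℕ) : MvPolynomial (Fin 6) ℤ →+* RR p q :=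
  Ideal.Quotient.mk (relIdeal p q)

/-- Every monomial `u_ξ^m u_{ξ^p}^n u_{ξ^q}^l` has infinite additive order in `R`;
in particular it is nonzero. -/
theorem u_monomial_infinite_order (p q : ℕ) (hp : p.Prime) (hq : q.Prime)
    (hop : Odd p) (hoq : Odd q) (hpq : p ≠ q) (m n l : ℕ) :
    ∀ k : ℤ, k • (mk p q (X 3) ^ m * mk p q (X 4) ^ n * mk p q (X 5) ^ l) = 0 → k = 0 := by
  intro k hk
  have hle : relIdeal p q ≤
      RingHom.ker (eval (fun i : Fin 6 => if (i : ℕ) ≤ 2 then (0 : ℤ) else 1)) := by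
    rw [relIdeal, Ideal.span_le]
    intro x hx
    simp only [Set.mem_insert_iff, Set.mem_singleton_iff] at hx
    rcases hx with h | h | h | h | h <;> subst h <;>
      simp [RingHom.mem_ker]
  let g : RR p q →+* ℤ := Ideal.Quotient.lift _ _ (fun a ha => hle ha)
  have hg : g (k • (mk p q (X 3) ^ m * mk p q (X 4) ^ n * mk p q (X 5) ^ l)) = k := by
    rw [zsmul_eq_mul, map_mul, map_intCast]
    simp only [g, mk, Ideal.Quotient.lift_mk, map_pow, map_mul, eval_X]
    erw [Ideal.Quotient.lift_mk, Ideal.Quotient.lift_mk, Ideal.Quotient.lift_mk]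
    simp only [eval_X]
    norm_num [show ((3 : Fin 6) : ℕ) = 3 from rfl, show ((4 : Fin 6) : ℕ) = 4 from rfl,
      show ((5 : Fin 6) : ℕ) = 5 from rfl]
  rw [hk, map_zero] at hg
  exact hg.symm
end

section
/- In the ring R, for all natural numbers i, n, l and every m ≥ 1, the element u_ξ^i · u_{ξ^p}^n · u_{ξ^q}^l · a_ξ^m has additive order exactly pq; that is, pq · (u_ξ^i u_{ξ^p}^n u_{ξ^q}^l a_ξ^m) = 0 and k · (u_ξ^i u_{ξ^p}^n u_{ξ^q}^l a_ξ^m) ≠ 0 for every integer k with 0 < k < pq. (These are the Type I generators in the proof of Theorem 3.8, whose cohomology group is K_p⟨ℤ/p⟩ ⊕ K_q⟨ℤ/q⟩ ≅ ℤ/pq at the top level.) -/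
open MvPolynomial

/-- Evaluation `a_ξ ↦ 1`, `a_{ξ^p} ↦ p`, `a_{ξ^q} ↦ q`, `u_* ↦ 1` in `ZMod (p*q)`. -/
noncomputable def evalPQ (p q : ℕ) : MvPolynomial (Fin 6) ℤ →+* ZMod (p * q) :=
  eval₂Hom (Int.castRingHom _)
    (fun j => if j = 1 then (p : ZMod (p * q)) else if j = 2 then (q : ZMod (p * q)) else 1)

lemma relIdeal_le_ker (p q : ℕ) : relIdeal p q ≤ RingHom.ker (evalPQ p q) := by
  rw [relIdeal, Ideal.span_le]
  intro f hf
  simp only [Set.mem_insert_iff, Set.mem_singleton_iff] at hf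
  rcases hf with rfl | rfl | rfl | rfl | rfl <;>
    simp [RingHom.mem_ker, evalPQ, mul_comm, Nat.cast_mul] <;>
    push_cast <;>
    simp [← Nat.cast_mul, ZMod.natCast_self, mul_comm]

/-- Type I generators `u_ξ^i u_{ξ^p}^n u_{ξ^q}^l a_ξ^m` with `m ≥ 1` have additive
order exactly `pq` in `R`. -/
theorem typeI_order_pq (p q : ℕ) (hp : p.Prime) (hq : q.Prime)
    (hop : Odd p) (hoq : Odd q) (hpq : p ≠ q) (i n l m : ℕ) (hm : 1 ≤ m) :
    ((p : ℤ) * q) • (mk p q (X 3) ^ i * mk p q (X 4) ^ n * mk p q (X 5) ^ l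
        * mk p q (X 0) ^ m) = 0 ∧
    ∀ k : ℤ, 0 < k → k < (p : ℤ) * q →
      k • (mk p q (X 3) ^ i * mk p q (X 4) ^ n * mk p q (X 5) ^ l
        * mk p q (X 0) ^ m) ≠ 0 := by
  have hpq0 : p * q ≠ 0 := Nat.mul_ne_zero hp.ne_zero hq.ne_zero
  haveI : NeZero (p * q) := ⟨hpq0⟩
  constructor
  · -- pq • x = 0
    have h1 : mk p q (C ((p : ℤ) * q) * X 0) = 0 := by
      rw [mk, Ideal.Quotient.eq_zero_iff_mem]
      exact Ideal.subset_span (by simp)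
    obtain ⟨m', rfl⟩ : ∃ m', m = m' + 1 := ⟨m - 1, (Nat.succ_pred_eq_of_pos hm).symm⟩
    have hC : mk p q (C ((p : ℤ) * q)) = (((p : ℤ) * q : ℤ) : RR p q) := by
      rw [eq_intCast (C : ℤ →+* MvPolynomial (Fin 6) ℤ), map_intCast]
    have : ((p : ℤ) * q) • (mk p q (X 3) ^ i * mk p q (X 4) ^ n * mk p q (X 5) ^ l
        * mk p q (X 0) ^ (m' + 1))
        = mk p q (C ((p : ℤ) * q) * X 0) *
          (mk p q (X 3) ^ i * mk p q (X 4) ^ n * mk p q (X 5) ^ l * mk p q (X 0) ^ m') := by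
      rw [zsmul_eq_mul, map_mul, hC]
      push_cast
      ring
    rw [this, h1, zero_mul]
  · intro k hk0 hk hzero
    -- descend the evaluation map to the quotient
    set lift := Ideal.Quotient.lift (relIdeal p q) (evalPQ p q)
      (fun a ha => relIdeal_le_ker p q ha) with hlift
    have hφ : ∀ f, lift (mk p q f) = evalPQ p q f := fun f =>
      Ideal.Quotient.lift_mk (relIdeal p q) _ _
    have := congrArg lift hzero
    rw [map_zsmul, map_zero, map_mul, map_mul, map_mul, map_pow, map_pow, map_pow,
      map_pow, hφ, hφ, hφ, hφ] at this
    have e0 : evalPQ p q (X 0) = 1 := by simp [evalPQ]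
    have e3 : evalPQ p q (X 3) = 1 := by
      simp only [evalPQ, eval₂Hom_X']
      rfl
    have e4 : evalPQ p q (X 4) = 1 := by
      simp only [evalPQ, eval₂Hom_X']
      rfl
    have e5 : evalPQ p q (X 5) = 1 := by
      simp only [evalPQ, eval₂Hom_X']
      rfl
    rw [e0, e3, e4, e5] at this
    simp only [one_pow, mul_one, zsmul_eq_mul, mul_one] at this
    -- (k : ZMod (p*q)) = 0 → (p*q : ℤ) ∣ k
    have hdvd : ((p * q : ℕ) : ℤ) ∣ k := by
      rwa [← ZMod.intCast_zmod_eq_zero_iff_dvd]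
    have := Int.le_of_dvd hk0 hdvd
    push_cast at this
    omega
end

section
/- In the ring R, for all natural numbers m, n, l and every j ≥ 1, the element a_ξ^m · a_{ξ^p}^j · u_{ξ^p}^n · u_{ξ^q}^l has additive order exactly q; that is, q times this element is 0, and k times it is nonzero for every integer k with 0 < k < q. (These are the Type II generators in the proof of Theorem 3.8, whose cohomology group is K_q⟨ℤ/q⟩ ≅ ℤ/q at the top level.) -/
open MvPolynomial

/-- Evaluation `a_ξ ↦ 1, a_{ξ^p} ↦ 1, a_{ξ^q} ↦ 0, u_ξ ↦ p, u_{ξ^p} ↦ 1, u_{ξ^q} ↦ 1`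
into `ZMod q`. -/
noncomputable def ev (p q : ℕ) : MvPolynomial (Fin 6) ℤ →+* ZMod q :=
  (aeval (![1, 1, 0, (p : ZMod q), 1, 1] : Fin 6 → ZMod q)).toRingHom

lemma ev_vanish (p q : ℕ) : relIdeal p q ≤ RingHom.ker (ev p q) := by
  rw [relIdeal, Ideal.span_le]
  intro x hx
  simp only [Set.mem_insert_iff, Set.mem_singleton_iff] at hx
  have hq0 : ((q : ℤ) : ZMod q) = 0 := by
    simp [ZMod.intCast_zmod_eq_zero_iff_dvd]
  rcases hx with rfl | rfl | rfl | rfl | rfl <;>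
    simp [ev, RingHom.mem_ker, aeval_X, hq0, Matrix.cons_val_zero, Matrix.cons_val_one] <;>
    ring_nf <;> simp [hq0]

/-- The lifted evaluation on the quotient. -/
noncomputable def evQ (p q : ℕ) : RR p q →+* ZMod q :=
  Ideal.Quotient.lift (relIdeal p q) (ev p q) (fun a ha => ev_vanish p q ha)

/-- Type II generators `a_ξ^m a_{ξ^p}^j u_{ξ^p}^n u_{ξ^q}^l` with `j ≥ 1` have additive
order exactly `q` in `R`. -/
theorem typeII_order_q (p q : ℕ) (hp : p.Prime) (hq : q.Prime)
    (hop : Odd p) (hoq : Odd q) (hpq : p ≠ q) (m n l j : ℕ) (hj : 1 ≤ j) :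
    (q : ℤ) • (mk p q (X 0) ^ m * mk p q (X 1) ^ j * mk p q (X 4) ^ n
        * mk p q (X 5) ^ l) = 0 ∧
    ∀ k : ℤ, 0 < k → k < (q : ℤ) →
      k • (mk p q (X 0) ^ m * mk p q (X 1) ^ j * mk p q (X 4) ^ n
        * mk p q (X 5) ^ l) ≠ 0 := by
  constructor
  · obtain ⟨j', rfl⟩ : ∃ j', j = j' + 1 := ⟨j - 1, (Nat.succ_pred_eq_of_pos hj).symm⟩
    have h1 : mk p q (C (q : ℤ) * X 1) = 0 := by
      rw [mk, Ideal.Quotient.eq_zero_iff_mem, relIdeal]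
      exact Ideal.subset_span (by simp)
    have h2 : ((q : ℤ) : RR p q) * mk p q (X 1) = 0 := by
      rw [eq_intCast (C : ℤ →+* MvPolynomial (Fin 6) ℤ) (q : ℤ), map_mul,
        map_intCast] at h1
      exact h1
    rw [zsmul_eq_mul]
    calc ((q : ℤ) : RR p q) * (mk p q (X 0) ^ m * mk p q (X 1) ^ (j' + 1)
          * mk p q (X 4) ^ n * mk p q (X 5) ^ l)
        = (((q : ℤ) : RR p q) * mk p q (X 1)) * (mk p q (X 0) ^ m * mk p q (X 1) ^ j'
          * mk p q (X 4) ^ n * mk p q (X 5) ^ l) := by ring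
      _ = 0 := by rw [h2, zero_mul]
  · intro k hk1 hk2 hcontra
    have := congrArg (evQ p q) hcontra
    rw [map_zsmul, map_zero] at this
    have hev : ∀ i : Fin 6, evQ p q (mk p q (X i)) = ev p q (X i) := fun i => rfl
    simp only [map_mul, map_pow, hev] at this
    have h01 : ev p q (X 0) = 1 := by simp [ev, aeval_X]
    have h11 : ev p q (X 1) = 1 := by simp [ev, aeval_X]
    have h41 : ev p q (X 4) = 1 := by simp [ev, aeval_X]
    have h51 : ev p q (X 5) = 1 := by simp [ev, aeval_X]
    rw [h01, h11, h41, h51] at this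
    simp only [one_pow, mul_one, smul_eq_mul] at this
    have : (k : ZMod q) = 0 := by simpa using this
    rw [ZMod.intCast_zmod_eq_zero_iff_dvd] at this
    have := Int.le_of_dvd hk1 this
    omega
end

section
/- In the ring R, for all natural numbers m, n, l and every j ≥ 1, the element a_ξ^m · a_{ξ^q}^j · u_{ξ^p}^n · u_{ξ^q}^l has additive order exactly p; that is, p times this element is 0, and k times it is nonzero for every integer k with 0 < k < p. (These are the Type III generators in the proof of Theorem 3.8, whose cohomology group is K_p⟨ℤ/p⟩ ≅ ℤ/p at the top level.) -/
open MvPolynomial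

/-- A detecting homomorphism: kill `a_{ξ^p}`, send `a_{ξ^q} ↦ 1`,
`u_ξ ↦ q u_{ξ^q} a_ξ`, reduce coefficients mod `p`. -/
noncomputable def detect (p q : ℕ) :
    MvPolynomial (Fin 6) ℤ →+* MvPolynomial (Fin 6) (ZMod p) :=
  eval₂Hom (Int.castRingHom _)
    ![X 0, 0, 1, C (q : ZMod p) * (X 5 * X 0), X 4, X 5]

lemma detect_X0 (p q : ℕ) : detect p q (X 0) = X 0 := by simp only [detect, eval₂Hom_X']; rfl
lemma detect_X1 (p q : ℕ) : detect p q (X 1) = 0 := by simp only [detect, eval₂Hom_X']; rfl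
lemma detect_X2 (p q : ℕ) : detect p q (X 2) = 1 := by simp only [detect, eval₂Hom_X']; rfl
lemma detect_X3 (p q : ℕ) : detect p q (X 3) = C (q : ZMod p) * (X 5 * X 0) := by
  simp only [detect, eval₂Hom_X']; rfl
lemma detect_X4 (p q : ℕ) : detect p q (X 4) = X 4 := by simp only [detect, eval₂Hom_X']; rfl
lemma detect_X5 (p q : ℕ) : detect p q (X 5) = X 5 := by simp only [detect, eval₂Hom_X']; rfl
lemma detect_C (p q : ℕ) (a : ℤ) : detect p q (C a) = C ((a : ZMod p)) := by
  simp only [detect, eval₂Hom_C, Int.coe_castRingHom]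
  exact (map_intCast (C : ZMod p →+* MvPolynomial (Fin 6) (ZMod p)) a).symm

lemma detect_kills (p q : ℕ) : relIdeal p q ≤ RingHom.ker (detect p q) := by
  rw [relIdeal, Ideal.span_le]
  intro x hx
  simp only [Set.mem_insert_iff, Set.mem_singleton_iff] at hx
  have hpp : ((p : ZMod p)) = 0 := ZMod.natCast_self p
  rcases hx with rfl | rfl | rfl | rfl | rfl <;>
    simp only [SetLike.mem_coe, RingHom.mem_ker, map_sub, map_mul, detect_X0, detect_X1,
      detect_X2, detect_X3, detect_X4, detect_X5, detect_C] <;>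
    simp [Int.cast_mul, Int.cast_natCast, hpp]

/-- Type III generators `a_ξ^m a_{ξ^q}^j u_{ξ^p}^n u_{ξ^q}^l` with `j ≥ 1` have additive
order exactly `p` in `R`. -/
theorem typeIII_order_p (p q : ℕ) (hp : p.Prime) (hq : q.Prime)
    (hop : Odd p) (hoq : Odd q) (hpq : p ≠ q) (m n l j : ℕ) (hj : 1 ≤ j) :
    (p : ℤ) • (mk p q (X 0) ^ m * mk p q (X 2) ^ j * mk p q (X 4) ^ n
        * mk p q (X 5) ^ l) = 0 ∧
    ∀ k : ℤ, 0 < k → k < (p : ℤ) →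
      k • (mk p q (X 0) ^ m * mk p q (X 2) ^ j * mk p q (X 4) ^ n
        * mk p q (X 5) ^ l) ≠ 0 := by
  constructor
  · obtain ⟨j', rfl⟩ : ∃ j', j = j' + 1 := ⟨j - 1, (Nat.succ_pred_eq_of_pos hj).symm⟩
    have hC : mk p q (C (p : ℤ)) * mk p q (X 2) = 0 := by
      rw [← map_mul]
      exact Ideal.Quotient.eq_zero_iff_mem.mpr (Ideal.subset_span (by simp))
    have h1 : (C (p : ℤ) : MvPolynomial (Fin 6) ℤ) = ((p : ℤ) : MvPolynomial (Fin 6) ℤ) := by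
      simpa using map_intCast (C : ℤ →+* MvPolynomial (Fin 6) ℤ) (p : ℤ)
    have hcast : ((p : ℤ) : RR p q) = mk p q (C (p : ℤ)) := by
      rw [h1, map_intCast]
    rw [zsmul_eq_mul, hcast, pow_succ]
    linear_combination (mk p q (X 0) ^ m * mk p q (X 2) ^ j' * mk p q (X 4) ^ n
      * mk p q (X 5) ^ l) * hC
  · intro k hk0 hkp hzero
    have hmem : k • (X 0 ^ m * X 2 ^ j * X 4 ^ n * X 5 ^ l :
        MvPolynomial (Fin 6) ℤ) ∈ relIdeal p q := by
      rw [← Ideal.Quotient.eq_zero_iff_mem]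
      have h2 : (Ideal.Quotient.mk (relIdeal p q))
          (k • (X 0 ^ m * X 2 ^ j * X 4 ^ n * X 5 ^ l)) =
          k • (mk p q (X 0) ^ m * mk p q (X 2) ^ j * mk p q (X 4) ^ n
            * mk p q (X 5) ^ l) := by
        simp [mk, map_zsmul]
      rw [h2, hzero]
    have h0 : detect p q (k • (X 0 ^ m * X 2 ^ j * X 4 ^ n * X 5 ^ l)) = 0 :=
      detect_kills p q hmem
    have hval : detect p q (k • (X 0 ^ m * X 2 ^ j * X 4 ^ n * X 5 ^ l)) =
        C (k : ZMod p) * (X 0 ^ m * X 4 ^ n * X 5 ^ l) := by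
      rw [map_zsmul, map_mul, map_mul, map_mul, map_pow, map_pow, map_pow, map_pow,
        detect_X0, detect_X2, detect_X4, detect_X5, zsmul_eq_mul,
        ← map_intCast (C : ZMod p →+* MvPolynomial (Fin 6) (ZMod p)) k]
      ring
    rw [hval] at h0
    have hpp : Fact p.Prime := ⟨hp⟩
    have hkne : (C (k : ZMod p) : MvPolynomial (Fin 6) (ZMod p)) ≠ 0 := by
      rw [Ne, C_eq_zero, ZMod.intCast_zmod_eq_zero_iff_dvd]
      intro hdvd
      have := Int.le_of_dvd hk0 hdvd
      omega
    have hXne : (X 0 ^ m * X 4 ^ n * X 5 ^ l : MvPolynomial (Fin 6) (ZMod p)) ≠ 0 :=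
      mul_ne_zero (mul_ne_zero (pow_ne_zero _ (X_ne_zero _)) (pow_ne_zero _ (X_ne_zero _)))
        (pow_ne_zero _ (X_ne_zero _))
    exact mul_ne_zero hkne hXne h0
end

section
/- The ring homomorphism from the polynomial ring ℤ[x, y, z] to R sending x ↦ u_ξ, y ↦ u_{ξ^p}, z ↦ u_{ξ^q} is injective; i.e., the subring of R generated by the orientation classes u_ξ, u_{ξ^p}, u_{ξ^q} is a polynomial ring on these three elements. (This is the |⋆| = 0 part of Theorem 3.8, where the cohomology is the constant Mackey functor ℤ generated by the monomials u_ξ^m u_{ξ^p}^n u_{ξ^q}^l.) -/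
open MvPolynomial

/-- Retraction on the polynomial level: kill the `a` classes, send `u`'s to variables. -/
noncomputable def retr0 : MvPolynomial (Fin 6) ℤ →ₐ[ℤ] MvPolynomial (Fin 3) ℤ :=
  MvPolynomial.aeval ![0, 0, 0, X 0, X 1, X 2]

lemma relIdeal_le_ker_s6 (p q : ℕ) :
    relIdeal p q ≤ RingHom.ker (retr0 : MvPolynomial (Fin 6) ℤ →ₐ[ℤ] _).toRingHom := by
  rw [relIdeal, Ideal.span_le]
  rintro r (rfl | rfl | rfl | rfl | rfl) <;>
    simp [RingHom.mem_ker, retr0]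

/-- Retraction `R → ℤ[x,y,z]`. -/
noncomputable def retr (p q : ℕ) : RR p q →ₐ[ℤ] MvPolynomial (Fin 3) ℤ :=
  Ideal.Quotient.liftₐ (relIdeal p q) retr0 (fun a ha => relIdeal_le_ker_s6 p q ha)

/-- The subring of `R` generated by the orientation classes `u_ξ, u_{ξ^p}, u_{ξ^q}`
is a polynomial ring on these three elements: the natural map
`ℤ[x,y,z] → R` sending `x ↦ u_ξ`, `y ↦ u_{ξ^p}`, `z ↦ u_{ξ^q}` is injective. -/
theorem u_subring_polynomial (p q : ℕ) (hp : p.Prime) (hq : q.Prime)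
    (hop : Odd p) (hoq : Odd q) (hpq : p ≠ q) :
    Function.Injective
      (MvPolynomial.aeval (R := ℤ)
        ![mk p q (X 3), mk p q (X 4), mk p q (X 5)] :
        MvPolynomial (Fin 3) ℤ →ₐ[ℤ] RR p q) := by
  have key : (retr p q).comp
      (MvPolynomial.aeval (R := ℤ)
        ![mk p q (X 3), mk p q (X 4), mk p q (X 5)]) = AlgHom.id ℤ _ := by
    apply MvPolynomial.algHom_ext
    intro i
    fin_cases i <;>
      simp [mk, Ideal.Quotient.liftₐ_apply, Matrix.cons_val_succ] <;> (show retr0 _ = _; simp [retr0])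
  intro a b hab
  have := congrArg (retr p q) hab
  calc a = (retr p q).comp (MvPolynomial.aeval (R := ℤ)
        ![mk p q (X 3), mk p q (X 4), mk p q (X 5)]) a := by rw [key]; rfl
    _ = (retr p q).comp (MvPolynomial.aeval (R := ℤ)
        ![mk p q (X 3), mk p q (X 4), mk p q (X 5)]) b := this
    _ = b := by rw [key]; rfl
end

section
/- Monomial reduction lemma for R: for every monomial M = a_ξ^{b₁} a_{ξ^p}^{b₂} a_{ξ^q}^{b₃} u_ξ^{c₁} u_{ξ^p}^{c₂} u_{ξ^q}^{c₃} in the six variables, there exist an integer c and a monomial M' = a_ξ^{b₁'} a_{ξ^p}^{b₂'} a_{ξ^q}^{b₃'} u_ξ^{c₁'} u_{ξ^p}^{c₂'} u_{ξ^q}^{c₃'} such that the image of M in R equals c times the image of M', and M' satisfies: b₂' = 0 or b₃' = 0; c₁' = 0 or b₂' = 0; and c₁' = 0 or b₃' = 0 (i.e., M' involves at most one of a_{ξ^p}, a_{ξ^q}, and does not involve u_ξ together with either of them). (This is the reduction to the Type I, II, III generators in the proof of Theorem 3.8.) -/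
open MvPolynomial

lemma mk_mem_zero (p q : ℕ) {f : MvPolynomial (Fin 6) ℤ}
    (h : f ∈ ({ C ((p : ℤ) * q) * X 0,
      C (q : ℤ) * X 1,
      C (p : ℤ) * X 2,
      X 3 * X 1 - C (p : ℤ) * (X 4 * X 0),
      X 3 * X 2 - C (q : ℤ) * (X 5 * X 0) } : Set (MvPolynomial (Fin 6) ℤ))) :
    mk p q f = 0 :=
  Ideal.Quotient.eq_zero_iff_mem.2 (Ideal.subset_span h)

lemma mk_C_mul (p q : ℕ) (k : ℤ) (f : MvPolynomial (Fin 6) ℤ) :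
    mk p q (C k * f) = k • mk p q f := by
  have h : (C k : MvPolynomial (Fin 6) ℤ) = (k : MvPolynomial (Fin 6) ℤ) := by simp
  rw [map_mul, h, map_intCast, zsmul_eq_mul]

lemma mk_rel2 (p q : ℕ) : mk p q (C (q : ℤ) * X 1) = 0 :=
  mk_mem_zero p q (by
    simp only [Set.mem_insert_iff, Set.mem_singleton_iff]
    tauto)

lemma mk_rel3 (p q : ℕ) : mk p q (C (p : ℤ) * X 2) = 0 :=
  mk_mem_zero p q (by
    simp only [Set.mem_insert_iff, Set.mem_singleton_iff]
    tauto)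

lemma mk_rel4 (p q : ℕ) : mk p q (X 3 * X 1 - C (p : ℤ) * (X 4 * X 0)) = 0 :=
  mk_mem_zero p q (by
    simp only [Set.mem_insert_iff, Set.mem_singleton_iff]
    tauto)

lemma mk_rel5 (p q : ℕ) : mk p q (X 3 * X 2 - C (q : ℤ) * (X 5 * X 0)) = 0 :=
  mk_mem_zero p q (by
    simp only [Set.mem_insert_iff, Set.mem_singleton_iff]
    tauto)

lemma mk_X1_mul_X2 (p q : ℕ) (hp : p.Prime) (hq : q.Prime) (hpq : p ≠ q) :
    mk p q (X 1 * X 2) = 0 := by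
  have hcop : IsCoprime (p : ℤ) (q : ℤ) := by
    rw [Int.isCoprime_iff_gcd_eq_one]
    exact (Nat.coprime_primes hp hq).2 hpq
  obtain ⟨u, v, huv⟩ := hcop
  have e : (X 1 * X 2 : MvPolynomial (Fin 6) ℤ)
      = C u * (X 1 * (C (p:ℤ) * X 2)) + C v * (X 2 * (C (q:ℤ) * X 1)) := by
    have h1 : (C (u * (p:ℤ) + v * q) : MvPolynomial (Fin 6) ℤ) = 1 := by
      rw [huv, map_one]
    have h2 : (C (u * (p:ℤ) + v * q) : MvPolynomial (Fin 6) ℤ)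
        = C u * C (p:ℤ) + C v * C (q:ℤ) := by
      rw [map_add, map_mul, map_mul]
    calc (X 1 * X 2 : MvPolynomial (Fin 6) ℤ)
        = C (u * (p:ℤ) + v * q) * (X 1 * X 2) := by rw [h1, one_mul]
      _ = _ := by rw [h2]; ring
  rw [e, map_add, mk_C_mul, mk_C_mul, map_mul (mk p q) (X 1), map_mul (mk p q) (X 2),
    mk_rel3, mk_rel2]
  simp

/-- Monomial reduction: in `R`, every monomial in the six generators is an integer
multiple of a monomial involving at most one of `a_{ξ^p}, a_{ξ^q}`, and not
involving `u_ξ` together with either of them. -/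
theorem monomial_reduction (p q : ℕ) (hp : p.Prime) (hq : q.Prime)
    (hop : Odd p) (hoq : Odd q) (hpq : p ≠ q) (b₁ b₂ b₃ c₁ c₂ c₃ : ℕ) :
    ∃ (c : ℤ) (b₁' b₂' b₃' c₁' c₂' c₃' : ℕ),
      mk p q (X 0 ^ b₁ * X 1 ^ b₂ * X 2 ^ b₃ * X 3 ^ c₁ * X 4 ^ c₂ * X 5 ^ c₃)
        = c • mk p q (X 0 ^ b₁' * X 1 ^ b₂' * X 2 ^ b₃' * X 3 ^ c₁' * X 4 ^ c₂' * X 5 ^ c₃')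
      ∧ (b₂' = 0 ∨ b₃' = 0) ∧ (c₁' = 0 ∨ b₂' = 0) ∧ (c₁' = 0 ∨ b₃' = 0) := by
  induction c₁ generalizing b₁ b₂ b₃ c₂ c₃ with
  | zero =>
    match b₂, b₃ with
    | 0, b₃ =>
      exact ⟨1, b₁, 0, b₃, 0, c₂, c₃, by rw [one_smul], Or.inl rfl, Or.inl rfl, Or.inl rfl⟩
    | b₂, 0 =>
      exact ⟨1, b₁, b₂, 0, 0, c₂, c₃, by rw [one_smul], Or.inr rfl, Or.inl rfl, Or.inl rfl⟩
    | b₂+1, b₃+1 =>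
      refine ⟨0, 0, 0, 0, 0, 0, 0, ?_, Or.inl rfl, Or.inl rfl, Or.inl rfl⟩
      rw [zero_smul]
      have e : (X 0 ^ b₁ * X 1 ^ (b₂+1) * X 2 ^ (b₃+1) * X 3 ^ 0 * X 4 ^ c₂ * X 5 ^ c₃ :
          MvPolynomial (Fin 6) ℤ)
          = (X 1 * X 2) * (X 0 ^ b₁ * X 1 ^ b₂ * X 2 ^ b₃ * X 4 ^ c₂ * X 5 ^ c₃) := by
        ring
      rw [e, map_mul, mk_X1_mul_X2 p q hp hq hpq, zero_mul]
  | succ c₁ ih =>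
    match b₂, b₃ with
    | b₂+1, b₃ =>
      have hrel : mk p q (X 3 * X 1) = (p : ℤ) • mk p q (X 4 * X 0) := by
        have h := mk_rel4 p q
        rw [map_sub, sub_eq_zero] at h
        rw [h, mk_C_mul]
      have key : mk p q (X 0 ^ b₁ * X 1 ^ (b₂+1) * X 2 ^ b₃ * X 3 ^ (c₁+1) * X 4 ^ c₂ * X 5 ^ c₃)
          = (p : ℤ) • mk p q (X 0 ^ (b₁+1) * X 1 ^ b₂ * X 2 ^ b₃ * X 3 ^ c₁ * X 4 ^ (c₂+1) * X 5 ^ c₃) := by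
        have e1 : (X 0 ^ b₁ * X 1 ^ (b₂+1) * X 2 ^ b₃ * X 3 ^ (c₁+1) * X 4 ^ c₂ * X 5 ^ c₃ :
            MvPolynomial (Fin 6) ℤ)
            = (X 3 * X 1) * (X 0 ^ b₁ * X 1 ^ b₂ * X 2 ^ b₃ * X 3 ^ c₁ * X 4 ^ c₂ * X 5 ^ c₃) := by ring
        have e2 : (X 0 ^ (b₁+1) * X 1 ^ b₂ * X 2 ^ b₃ * X 3 ^ c₁ * X 4 ^ (c₂+1) * X 5 ^ c₃ :
            MvPolynomial (Fin 6) ℤ)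
            = (X 4 * X 0) * (X 0 ^ b₁ * X 1 ^ b₂ * X 2 ^ b₃ * X 3 ^ c₁ * X 4 ^ c₂ * X 5 ^ c₃) := by ring
        rw [e1, e2, map_mul (mk p q) (X 3 * X 1), map_mul (mk p q) (X 4 * X 0), hrel,
          smul_mul_assoc]
      obtain ⟨c, b₁', b₂', b₃', c₁', c₂', c₃', heq, h1, h2, h3⟩ :=
        ih (b₁+1) b₂ b₃ (c₂+1) c₃
      exact ⟨p * c, b₁', b₂', b₃', c₁', c₂', c₃', by rw [key, heq, smul_smul], h1, h2, h3⟩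
    | 0, b₃+1 =>
      have hrel : mk p q (X 3 * X 2) = (q : ℤ) • mk p q (X 5 * X 0) := by
        have h := mk_rel5 p q
        rw [map_sub, sub_eq_zero] at h
        rw [h, mk_C_mul]
      have key : mk p q (X 0 ^ b₁ * X 1 ^ 0 * X 2 ^ (b₃+1) * X 3 ^ (c₁+1) * X 4 ^ c₂ * X 5 ^ c₃)
          = (q : ℤ) • mk p q (X 0 ^ (b₁+1) * X 1 ^ 0 * X 2 ^ b₃ * X 3 ^ c₁ * X 4 ^ c₂ * X 5 ^ (c₃+1)) := by
        have e1 : (X 0 ^ b₁ * X 1 ^ 0 * X 2 ^ (b₃+1) * X 3 ^ (c₁+1) * X 4 ^ c₂ * X 5 ^ c₃ :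
            MvPolynomial (Fin 6) ℤ)
            = (X 3 * X 2) * (X 0 ^ b₁ * X 1 ^ 0 * X 2 ^ b₃ * X 3 ^ c₁ * X 4 ^ c₂ * X 5 ^ c₃) := by ring
        have e2 : (X 0 ^ (b₁+1) * X 1 ^ 0 * X 2 ^ b₃ * X 3 ^ c₁ * X 4 ^ c₂ * X 5 ^ (c₃+1) :
            MvPolynomial (Fin 6) ℤ)
            = (X 5 * X 0) * (X 0 ^ b₁ * X 1 ^ 0 * X 2 ^ b₃ * X 3 ^ c₁ * X 4 ^ c₂ * X 5 ^ c₃) := by ring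
        rw [e1, e2, map_mul (mk p q) (X 3 * X 2), map_mul (mk p q) (X 5 * X 0), hrel,
          smul_mul_assoc]
      obtain ⟨c, b₁', b₂', b₃', c₁', c₂', c₃', heq, h1, h2, h3⟩ :=
        ih (b₁+1) 0 b₃ c₂ (c₃+1)
      exact ⟨q * c, b₁', b₂', b₃', c₁', c₂', c₃', by rw [key, heq, smul_smul], h1, h2, h3⟩
    | 0, 0 =>
      exact ⟨1, b₁, 0, 0, c₁+1, c₂, c₃, by rw [one_smul], Or.inl rfl, Or.inr rfl, Or.inr rfl⟩
end

section
/- For every d ∈ ℕ⁴, the degree-d weighted-homogeneous component of R (the image in R of the ℤ-module of weighted-homogeneous polynomials of weighted degree d) is a cyclic abelian group, i.e., it is generated as an additive group by a single element. (This is the additive content of Theorem 3.8: in each RO(C_{pq})-degree ⋆ with ⋆ = V − * and V an actual representation, the cohomology group H^⋆_{C_{pq}}(S^0; ℤ) at the top level is cyclic, generated by a single monomial class.) -/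
open MvPolynomial

/-- The `ℕ⁴`-valued weights: `w(a_ξ)=(1,0,0,0)`, `w(a_{ξ^p})=(0,1,0,0)`,
`w(a_{ξ^q})=(0,0,1,0)`, `w(u_ξ)=(1,0,0,1)`, `w(u_{ξ^p})=(0,1,0,1)`,
`w(u_{ξ^q})=(0,0,1,1)`. -/
def wt : Fin 6 → (Fin 4 → ℕ) :=
  ![![1,0,0,0], ![0,1,0,0], ![0,0,1,0], ![1,0,0,1], ![0,1,0,1], ![0,0,1,1]]

noncomputable def mon (i j k x y z : ℕ) : MvPolynomial (Fin 6) ℤ :=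
  X 0 ^ i * X 1 ^ j * X 2 ^ k * X 3 ^ x * X 4 ^ y * X 5 ^ z

noncomputable def expv (i j k x y z : ℕ) : Fin 6 →₀ ℕ :=
  Finsupp.single 0 i + Finsupp.single 1 j + Finsupp.single 2 k +
  Finsupp.single 3 x + Finsupp.single 4 y + Finsupp.single 5 z

lemma mon_eq (i j k x y z : ℕ) : mon i j k x y z = monomial (expv i j k x y z) 1 := by
  simp [mon, expv, X_pow_eq_monomial, monomial_mul]

lemma weight_expv (i j k x y z : ℕ) :
    Finsupp.weight wt (expv i j k x y z) = ![i + x, j + y, k + z, x + y + z] := by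
  have hs : ∀ (a : Fin 6) (n : ℕ), Finsupp.weight wt (Finsupp.single a n) = n • wt a := by
    intro a n
    rw [Finsupp.weight_apply, Finsupp.sum_single_index (by simp)]
  simp only [expv, map_add, hs]
  simp only [show wt 0 = ![1,0,0,0] from rfl, show wt 1 = ![0,1,0,0] from rfl,
    show wt 2 = ![0,0,1,0] from rfl, show wt 3 = ![1,0,0,1] from rfl,
    show wt 4 = ![0,1,0,1] from rfl, show wt 5 = ![0,0,1,1] from rfl]
  funext r
  fin_cases r <;> simp

lemma expv_eta (v : Fin 6 →₀ ℕ) : v = expv (v 0) (v 1) (v 2) (v 3) (v 4) (v 5) := by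
  ext a
  fin_cases a <;> simp [expv, Finsupp.single_apply]

lemma mon_hom (i j k x y z : ℕ) (d : Fin 4 → ℕ)
    (h0 : i + x = d 0) (h1 : j + y = d 1) (h2 : k + z = d 2) (h3 : x + y + z = d 3) :
    (mon i j k x y z).IsWeightedHomogeneous wt d := by
  rw [mon_eq]
  apply isWeightedHomogeneous_monomial
  rw [weight_expv]
  funext r
  fin_cases r <;> simp [← h0, ← h1, ← h2, ← h3]

lemma smul_mk (p q : ℕ) (c : ℤ) (φ : MvPolynomial (Fin 6) ℤ) :
    c • mk p q φ = mk p q (C c * φ) := by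
  rw [zsmul_eq_mul, map_mul, eq_intCast (C : ℤ →+* MvPolynomial (Fin 6) ℤ) c, map_intCast]

lemma mk_rel_pq (p q : ℕ) : mk p q (C ((p:ℤ)*q) * X 0) = 0 :=
  Ideal.Quotient.eq_zero_iff_mem.2 (Ideal.subset_span (by simp [relIdeal]))

lemma mk_rel_q (p q : ℕ) : mk p q (C (q:ℤ) * X 1) = 0 :=
  Ideal.Quotient.eq_zero_iff_mem.2 (Ideal.subset_span (by simp))

lemma mk_rel_p (p q : ℕ) : mk p q (C (p:ℤ) * X 2) = 0 :=
  Ideal.Quotient.eq_zero_iff_mem.2 (Ideal.subset_span (by simp))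

lemma mk_rel_ub (p q : ℕ) : mk p q (X 3 * X 1) = mk p q (C (p:ℤ) * (X 4 * X 0)) :=
  Ideal.Quotient.eq.2 (Ideal.subset_span (by simp))

lemma mk_rel_uc (p q : ℕ) : mk p q (X 3 * X 2) = mk p q (C (q:ℤ) * (X 5 * X 0)) :=
  Ideal.Quotient.eq.2 (Ideal.subset_span (by simp))

lemma tor_b (p q : ℕ) (i j k x y z : ℕ) :
    (q:ℤ) • mk p q (mon i (j+1) k x y z) = 0 := by
  rw [smul_mk, show C (q:ℤ) * mon i (j+1) k x y z = (C (q:ℤ) * X 1) * mon i j k x y z by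
    simp only [mon]; ring, map_mul, mk_rel_q, zero_mul]

lemma tor_c (p q : ℕ) (i j k x y z : ℕ) :
    (p:ℤ) • mk p q (mon i j (k+1) x y z) = 0 := by
  rw [smul_mk, show C (p:ℤ) * mon i j (k+1) x y z = (C (p:ℤ) * X 2) * mon i j k x y z by
    simp only [mon]; ring, map_mul, mk_rel_p, zero_mul]

lemma red_p (p q : ℕ) (i j k x y z : ℕ) :
    mk p q (mon i (j+1) k (x+1) y z) = (p:ℤ) • mk p q (mon (i+1) j k x (y+1) z) := by
  rw [smul_mk, show mon i (j+1) k (x+1) y z = (X 3 * X 1) * mon i j k x y z by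
    simp only [mon]; ring, show C (p:ℤ) * mon (i+1) j k x (y+1) z
      = (C (p:ℤ) * (X 4 * X 0)) * mon i j k x y z by simp only [mon]; ring,
    map_mul (mk p q) (X 3 * X 1), map_mul (mk p q) (C (p:ℤ) * (X 4 * X 0)), mk_rel_ub]

lemma red_q (p q : ℕ) (i j k x y z : ℕ) :
    mk p q (mon i j (k+1) (x+1) y z) = (q:ℤ) • mk p q (mon (i+1) j k x y (z+1)) := by
  rw [smul_mk, show mon i j (k+1) (x+1) y z = (X 3 * X 2) * mon i j k x y z by
    simp only [mon]; ring, show C (q:ℤ) * mon (i+1) j k x y (z+1)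
      = (C (q:ℤ) * (X 5 * X 0)) * mon i j k x y z by simp only [mon]; ring,
    map_mul (mk p q) (X 3 * X 2), map_mul (mk p q) (C (q:ℤ) * (X 5 * X 0)), mk_rel_uc]

noncomputable def gen (m n l t : ℕ) : MvPolynomial (Fin 6) ℤ :=
  if n + l ≤ t then
    (if t ≤ m + n + l then mon (m+n+l-t) 0 0 (t-n-l) n l else 0)
  else
    (if n ≤ t then mon m 0 (n+l-t) 0 n (t-n) else 0) +
    (if l ≤ t then mon m (n+l-t) 0 0 (t-l) l else 0)

lemma gen_hom (d : Fin 4 → ℕ) :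
    (gen (d 0) (d 1) (d 2) (d 3)).IsWeightedHomogeneous wt d := by
  unfold gen
  split_ifs with h1 h2 h3 h4 h5
  · exact mon_hom _ _ _ _ _ _ _ (by omega) (by omega) (by omega) (by omega)
  · exact isWeightedHomogeneous_zero ℤ wt d
  all_goals
    refine IsWeightedHomogeneous.add ?_ ?_ <;>
    first
      | exact isWeightedHomogeneous_zero ℤ wt d
      | exact mon_hom _ _ _ _ _ _ _ (by omega) (by omega) (by omega) (by omega)

lemma kill_p (p q : ℕ) (α β : ℤ) (h : α * p + β * q = 1) (v : RR p q)
    (hv : (p:ℤ) • v = 0) : (β * q) • v = v := by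
  have hb : β * (q:ℤ) = 1 - α * p := by linarith
  rw [hb, sub_smul, one_smul, mul_smul, hv, smul_zero, sub_zero]

lemma kill_q (p q : ℕ) (α β : ℤ) (h : α * p + β * q = 1) (v : RR p q)
    (hv : (q:ℤ) • v = 0) : (α * p) • v = v := by
  have hb : α * (p:ℤ) = 1 - β * q := by linarith
  rw [hb, sub_smul, one_smul, mul_smul, hv, smul_zero, sub_zero]

lemma mon_reduce (p q : ℕ) (α β : ℤ) (hco : α * p + β * q = 1) (m n l t : ℕ) :
    ∀ x i j k y z, i + x = m → j + y = n → k + z = l → x + y + z = t →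
      ∃ c : ℤ, mk p q (mon i j k x y z) = c • mk p q (gen m n l t) := by
  intro x
  induction x with
  | zero =>
    intro i j k y z h0 h1 h2 h3
    match j, k with
    | 0, 0 =>
      refine ⟨1, ?_⟩
      obtain rfl : n = y := by omega
      obtain rfl : l = z := by omega
      obtain rfl : m = i := by omega
      rw [one_smul]
      unfold gen
      rw [if_pos (show n + l ≤ t by omega), if_pos (show t ≤ m + n + l by omega),
        show m + n + l - t = m by omega, show t - n - l = 0 by omega]
    | j'+1, k'+1 =>
      refine ⟨0, ?_⟩
      rw [zero_smul]
      have hq := tor_b p q i j' (k'+1) 0 y z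
      have hp := tor_c p q i (j'+1) k' 0 y z
      calc mk p q (mon i (j'+1) (k'+1) 0 y z)
          = (α * p + β * q) • mk p q (mon i (j'+1) (k'+1) 0 y z) := by rw [hco, one_smul]
        _ = α • ((p:ℤ) • mk p q (mon i (j'+1) (k'+1) 0 y z))
            + β • ((q:ℤ) • mk p q (mon i (j'+1) (k'+1) 0 y z)) := by
            rw [add_smul, mul_smul, mul_smul]
        _ = 0 := by rw [hp, hq, smul_zero, smul_zero, add_zero]
    | 0, k'+1 =>
      refine ⟨β * q, ?_⟩
      obtain rfl : m = i := by omega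
      obtain rfl : n = y := by omega
      unfold gen
      rw [if_neg (show ¬ n + l ≤ t by omega), if_pos (show n ≤ t by omega),
        show n + l - t = k' + 1 by omega, show t - n = z by omega]
      by_cases hlt : l ≤ t
      · rw [if_pos hlt, map_add, smul_add,
          kill_p p q α β hco _ (tor_c p q m 0 k' 0 n z),
          mul_smul, tor_b p q m k' 0 0 (t-l) l, smul_zero, add_zero]
      · rw [if_neg hlt, add_zero, kill_p p q α β hco _ (tor_c p q m 0 k' 0 n z)]
    | j'+1, 0 =>
      refine ⟨α * p, ?_⟩
      obtain rfl : m = i := by omega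
      obtain rfl : l = z := by omega
      unfold gen
      rw [if_neg (show ¬ n + l ≤ t by omega), if_pos (show l ≤ t by omega),
        show n + l - t = j' + 1 by omega, show t - l = y by omega]
      by_cases hnt : n ≤ t
      · rw [if_pos hnt, map_add, smul_add,
          kill_q p q α β hco _ (tor_b p q m j' 0 0 y l),
          mul_smul, tor_c p q m 0 j' 0 n (t-n), smul_zero, zero_add]
      · rw [if_neg hnt, zero_add, kill_q p q α β hco _ (tor_b p q m j' 0 0 y l)]
  | succ x ih =>
    intro i j k y z h0 h1 h2 h3
    match j, k with
    | 0, 0 =>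
      refine ⟨1, ?_⟩
      obtain rfl : n = y := by omega
      obtain rfl : l = z := by omega
      rw [one_smul]
      unfold gen
      rw [if_pos (show n + l ≤ t by omega), if_pos (show t ≤ m + n + l by omega),
        show m + n + l - t = i by omega, show t - n - l = x + 1 by omega]
    | j'+1, k =>
      obtain ⟨c, hc⟩ := ih (i+1) j' k (y+1) z (by omega) (by omega) (by omega) (by omega)
      exact ⟨p * c, by rw [red_p, hc, mul_smul]⟩
    | 0, k'+1 =>
      obtain ⟨c, hc⟩ := ih (i+1) 0 k' y (z+1) (by omega) (by omega) (by omega) (by omega)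
      exact ⟨q * c, by rw [red_q, hc, mul_smul]⟩

/-- Every weighted-homogeneous component of `R` is a cyclic abelian group: for each
degree `d ∈ ℕ⁴` there is a single element `g` whose integer multiples are exactly the
images in `R` of the weighted-homogeneous polynomials of degree `d`. -/
theorem component_cyclic (p q : ℕ) (hp : p.Prime) (hq : q.Prime)
    (hop : Odd p) (hoq : Odd q) (hpq : p ≠ q) (d : Fin 4 → ℕ) :
    ∃ g : RR p q, ∀ x : RR p q,
      (∃ φ : MvPolynomial (Fin 6) ℤ, φ.IsWeightedHomogeneous wt d ∧ mk p q φ = x)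
        ↔ ∃ k : ℤ, x = k • g := by
  obtain ⟨α, β, hco⟩ : ∃ α β : ℤ, α * p + β * q = 1 := by
    have h : IsCoprime (p:ℤ) (q:ℤ) :=
      Int.isCoprime_iff_gcd_eq_one.mpr (by
        simpa [Int.gcd_natCast_natCast] using (Nat.coprime_primes hp hq).mpr hpq)
    obtain ⟨a, b, hab⟩ := h
    exact ⟨a, b, by linarith⟩
  refine ⟨mk p q (gen (d 0) (d 1) (d 2) (d 3)), fun x => ⟨?_, ?_⟩⟩
  · rintro ⟨φ, hφ, rfl⟩
    have key : ∀ v : Fin 6 →₀ ℕ, ∃ c : ℤ,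
        mk p q (monomial v (coeff v φ)) = c • mk p q (gen (d 0) (d 1) (d 2) (d 3)) := by
      intro v
      by_cases hv : coeff v φ = 0
      · exact ⟨0, by rw [hv, monomial_zero, map_zero, zero_smul]⟩
      · have hw : Finsupp.weight wt (expv (v 0) (v 1) (v 2) (v 3) (v 4) (v 5)) = d := by
          rw [← expv_eta]; exact hφ hv
        rw [weight_expv] at hw
        have e0 : v 0 + v 3 = d 0 := by simpa using congrFun hw 0
        have e1 : v 1 + v 4 = d 1 := by simpa using congrFun hw 1
        have e2 : v 2 + v 5 = d 2 := by simpa using congrFun hw 2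
        have e3 : v 3 + v 4 + v 5 = d 3 := by simpa using congrFun hw 3
        obtain ⟨c, hc⟩ := mon_reduce p q α β hco (d 0) (d 1) (d 2) (d 3)
          (v 3) (v 0) (v 1) (v 2) (v 4) (v 5) e0 e1 e2 e3
        refine ⟨coeff v φ * c, ?_⟩
        have hm : monomial v (coeff v φ)
            = C (coeff v φ) * mon (v 0) (v 1) (v 2) (v 3) (v 4) (v 5) := by
          rw [mon_eq, C_mul_monomial, mul_one, ← expv_eta]
        rw [hm, ← smul_mk, hc, smul_smul]
    choose c hc using key
    refine ⟨∑ v ∈ φ.support, c v, ?_⟩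
    conv_lhs => rw [φ.as_sum]
    rw [map_sum, Finset.sum_smul]
    exact Finset.sum_congr rfl fun v _ => hc v
  · rintro ⟨k, rfl⟩
    refine ⟨C k * gen (d 0) (d 1) (d 2) (d 3), ?_, ?_⟩
    · simpa using (isWeightedHomogeneous_C wt k).mul (gen_hom d)
    · rw [← smul_mk]
end

section
/- For all natural numbers m, n, l, the weighted-homogeneous component of R of degree (m, n, l, m+n+l) ∈ ℕ⁴ is the infinite cyclic additive group generated by the image of the monomial u_ξ^m u_{ξ^p}^n u_{ξ^q}^l. (This is the |⋆| = 0 case of Theorem 3.8: the cohomology group is ℤ, generated by the unique monomial u_ξ^m u_{ξ^p}^n u_{ξ^q}^l.) -/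
open MvPolynomial

lemma wt_comp (d : Fin 6 →₀ ℕ) (j : Fin 4) :
    Finsupp.weight wt d j = ∑ i : Fin 6, d i * wt i j := by
  have h1 : Finsupp.weight wt d = ∑ i : Fin 6, d i • wt i := by
    rw [Finsupp.weight_apply]
    exact Finsupp.sum_fintype _ _ (fun i => zero_smul ℕ _)
  rw [h1, Finset.sum_apply]
  simp [Pi.smul_apply]

lemma wt_eqs (d : Fin 6 →₀ ℕ) (m n l : ℕ)
    (h : Finsupp.weight wt d = ![m, n, l, m + n + l]) :
    d 0 = 0 ∧ d 1 = 0 ∧ d 2 = 0 ∧ d 3 = m ∧ d 4 = n ∧ d 5 = l := by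
  have t0 : d 0 * 1 + d 1 * 0 + d 2 * 0 + d 3 * 1 + d 4 * 0 + d 5 * 0 = m := by
    have t := (wt_comp d 0).symm.trans (congrFun h 0); rw [Fin.sum_univ_six] at t; exact t
  have t1 : d 0 * 0 + d 1 * 1 + d 2 * 0 + d 3 * 0 + d 4 * 1 + d 5 * 0 = n := by
    have t := (wt_comp d 1).symm.trans (congrFun h 1); rw [Fin.sum_univ_six] at t; exact t
  have t2 : d 0 * 0 + d 1 * 0 + d 2 * 1 + d 3 * 0 + d 4 * 0 + d 5 * 1 = l := by
    have t := (wt_comp d 2).symm.trans (congrFun h 2); rw [Fin.sum_univ_six] at t; exact t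
  have t3 : d 0 * 0 + d 1 * 0 + d 2 * 0 + d 3 * 1 + d 4 * 1 + d 5 * 1 = m + n + l := by
    have t := (wt_comp d 3).symm.trans (congrFun h 3); rw [Fin.sum_univ_six] at t; exact t
  omega

lemma mono_eq (m n l : ℕ) :
    (X 3 ^ m * X 4 ^ n * X 5 ^ l : MvPolynomial (Fin 6) ℤ) =
      monomial (Finsupp.single 3 m + Finsupp.single 4 n + Finsupp.single 5 l) 1 := by
  simp [X_pow_eq_monomial, monomial_mul]

lemma d0_apply (m n l : ℕ) :
    ∀ i : Fin 6,
      (Finsupp.single 3 m + Finsupp.single 4 n + Finsupp.single 5 l : Fin 6 →₀ ℕ) i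
        = ![0, 0, 0, m, n, l] i := by
  intro i
  fin_cases i <;> simp [Finsupp.single_apply] <;> rfl

lemma exp_unique (m n l : ℕ) (d : Fin 6 →₀ ℕ)
    (h : Finsupp.weight wt d = ![m, n, l, m + n + l]) :
    d = Finsupp.single 3 m + Finsupp.single 4 n + Finsupp.single 5 l := by
  obtain ⟨h0, h1, h2, h3, h4, h5⟩ := wt_eqs d m n l h
  ext i
  rw [d0_apply]
  fin_cases i
  · exact h0
  · exact h1
  · exact h2
  · exact h3
  · exact h4
  · exact h5

lemma mono_homog (m n l : ℕ) :
    IsWeightedHomogeneous wt (X 3 ^ m * X 4 ^ n * X 5 ^ l : MvPolynomial (Fin 6) ℤ)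
      ![m, n, l, m + n + l] := by
  rw [mono_eq]
  apply isWeightedHomogeneous_monomial
  set d₀ : Fin 6 →₀ ℕ := Finsupp.single 3 m + Finsupp.single 4 n + Finsupp.single 5 l with hd₀
  have hv : ∀ i : Fin 6, d₀ i = ![0, 0, 0, m, n, l] i := d0_apply m n l
  have hv0 : d₀ 0 = 0 := hv 0
  have hv1 : d₀ 1 = 0 := hv 1
  have hv2 : d₀ 2 = 0 := hv 2
  have hv3 : d₀ 3 = m := hv 3
  have hv4 : d₀ 4 = n := hv 4
  have hv5 : d₀ 5 = l := hv 5
  funext j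
  fin_cases j
  · show Finsupp.weight wt d₀ 0 = m
    rw [wt_comp d₀ 0, Fin.sum_univ_six]
    show d₀ 0 * 1 + d₀ 1 * 0 + d₀ 2 * 0 + d₀ 3 * 1 + d₀ 4 * 0 + d₀ 5 * 0 = m
    omega
  · show Finsupp.weight wt d₀ 1 = n
    rw [wt_comp d₀ 1, Fin.sum_univ_six]
    show d₀ 0 * 0 + d₀ 1 * 1 + d₀ 2 * 0 + d₀ 3 * 0 + d₀ 4 * 1 + d₀ 5 * 0 = n
    omega
  · show Finsupp.weight wt d₀ 2 = l
    rw [wt_comp d₀ 2, Fin.sum_univ_six]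
    show d₀ 0 * 0 + d₀ 1 * 0 + d₀ 2 * 1 + d₀ 3 * 0 + d₀ 4 * 0 + d₀ 5 * 1 = l
    omega
  · show Finsupp.weight wt d₀ 3 = m + n + l
    rw [wt_comp d₀ 3, Fin.sum_univ_six]
    show d₀ 0 * 0 + d₀ 1 * 0 + d₀ 2 * 0 + d₀ 3 * 1 + d₀ 4 * 1 + d₀ 5 * 1 = m + n + l
    omega

/-- The weighted-homogeneous component of `R` of degree `(m,n,l,m+n+l)` is the
infinite cyclic group generated by the image of `u_ξ^m u_{ξ^p}^n u_{ξ^q}^l`. -/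
theorem component_of_u_monomial (p q : ℕ) (hp : p.Prime) (hq : q.Prime)
    (hop : Odd p) (hoq : Odd q) (hpq : p ≠ q) (m n l : ℕ) :
    (∀ x : RR p q,
      (∃ φ : MvPolynomial (Fin 6) ℤ,
          φ.IsWeightedHomogeneous wt ![m, n, l, m + n + l] ∧ mk p q φ = x)
        ↔ ∃ k : ℤ, x = k • mk p q (X 3 ^ m * X 4 ^ n * X 5 ^ l)) ∧
    (∀ k : ℤ, k • mk p q (X 3 ^ m * X 4 ^ n * X 5 ^ l) = 0 → k = 0) := by
  set d₀ : Fin 6 →₀ ℕ := Finsupp.single 3 m + Finsupp.single 4 n + Finsupp.single 5 l with hd₀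
  constructor
  · intro x
    constructor
    · rintro ⟨φ, hφ, rfl⟩
      refine ⟨φ.coeff d₀, ?_⟩
      have hφeq : φ = (φ.coeff d₀) • (X 3 ^ m * X 4 ^ n * X 5 ^ l) := by
        rw [mono_eq, smul_monomial, smul_eq_mul, mul_one]
        ext d
        rw [coeff_monomial]
        by_cases hd : d₀ = d
        · subst hd; simp [hd₀]
        · rw [if_neg hd]
          by_contra hc
          exact hd ((exp_unique m n l d (hφ hc)).symm)
      conv_lhs => rw [hφeq]
      rw [map_zsmul]
    · rintro ⟨k, rfl⟩
      refine ⟨k • (X 3 ^ m * X 4 ^ n * X 5 ^ l), ?_, map_zsmul _ _ _⟩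
      rw [← mem_weightedHomogeneousSubmodule ℤ]
      exact Submodule.smul_mem _ k
        ((mem_weightedHomogeneousSubmodule ℤ wt _ _).mpr (mono_homog m n l))
  · intro k hk
    rw [← map_zsmul (mk p q)] at hk
    have hmem : (k • (X 3 ^ m * X 4 ^ n * X 5 ^ l) : MvPolynomial (Fin 6) ℤ)
        ∈ relIdeal p q := Ideal.Quotient.eq_zero_iff_mem.mp hk
    set v : Fin 6 → ℤ := fun i => if i.val ≤ 2 then 0 else 1 with hv
    have hle : relIdeal p q ≤ RingHom.ker (eval v) := by
      rw [relIdeal, Ideal.span_le]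
      intro f hf
      simp only [Set.mem_insert_iff, Set.mem_singleton_iff] at hf
      rcases hf with rfl | rfl | rfl | rfl | rfl <;>
        simp [RingHom.mem_ker, hv]
    have := hle hmem
    simp [RingHom.mem_ker, hv] at this
    exact this
end
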